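/- Let G be a finite connected graph that is [p]-edge geodetic and H a finite connected graph that is [q]-edge geodetic, with p ≤ q, so that the strong product G ⊠ H is [p]-edge geodetic. Then |gen(G ⊠ H)| ≤ |V(H)|·|gen(G)| + |V(G)|·|E(H)| + 2·|gen(G)|·|E(H)|, where |gen(·)| denotes the minimum number of geodesics of the respective maximal length covering all edges of the respective graph. -/

import Mathlib

open SimpleGraph

/-- A walk is a `k`-geodesic if it has length `k` and is a shortest path
between its endpoints. -/
def IsKGeodesic {V : Type*} (G : SimpleGraph V) (k : ℕ) {u v : V} (w : G.Walk u v) : Prop :=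
  w.length = k ∧ G.dist u v = k

/-- A graph is `k`-edge geodetic if every edge lies on some `k`-geodesic. -/
def IsEdgeGeodetic {V : Type*} (G : SimpleGraph V) (k : ℕ) : Prop :=
  ∀ e ∈ G.edgeSet, ∃ (u v : V) (w : G.Walk u v), IsKGeodesic G k w ∧ e ∈ w.edges

/-- A graph is `[k]`-edge geodetic if it is `k`-edge geodetic but not `(k+1)`-edge geodetic. -/
def IsMaxEdgeGeodetic {V : Type*} (G : SimpleGraph V) (k : ℕ) : Prop :=
  IsEdgeGeodetic G k ∧ ¬ IsEdgeGeodetic G (k + 1)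

/-- `genNum G k` is the minimum number of `k`-geodesics of `G` whose edges
together cover all edges of `G`. -/
noncomputable def genNum {V : Type*} (G : SimpleGraph V) (k : ℕ) : ℕ :=
  sInf {r : ℕ | ∃ f : Fin r → Σ u : V, Σ v : V, G.Walk u v,
    (∀ i, IsKGeodesic G k (f i).2.2) ∧
    ∀ e ∈ G.edgeSet, ∃ i, e ∈ (f i).2.2.edges}

/-- The strong product of two simple graphs. -/
def strongProd {α β : Type*} (G : SimpleGraph α) (H : SimpleGraph β) :
    SimpleGraph (α × β) where
  Adj x y := (x.1 = y.1 ∧ H.Adj x.2 y.2) ∨ (x.2 = y.2 ∧ G.Adj x.1 y.1) ∨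
    (G.Adj x.1 y.1 ∧ H.Adj x.2 y.2)
  symm := by
    constructor
    rintro ⟨a₁, b₁⟩ ⟨a₂, b₂⟩ (⟨h, h'⟩ | ⟨h, h'⟩ | ⟨h, h'⟩)
    · exact Or.inl ⟨h.symm, h'.symm⟩
    · exact Or.inr (Or.inl ⟨h.symm, h'.symm⟩)
    · exact Or.inr (Or.inr ⟨h.symm, h'.symm⟩)
  loopless := by
    constructor
    rintro ⟨a, b⟩ (⟨_, h⟩ | ⟨_, h⟩ | ⟨h, _⟩) <;> exact h.ne rfl

/-!
Take a minimum cover of `E(G)` by `p`-geodesics. Copied into every layer `G × {b}` it covers the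
edges of these layers; zigzagged between `b` and `b'` along every dart `(b, b')` of `H` it covers
the diagonal edges. The edges of the layers `{a} × H` are covered one by one, by `p`-geodesics of
`H` obtained by cutting down `q`-geodesics. Every one of these walks has length `p` and projects
onto a `p`-geodesic of `G` or of `H`; as the projections do not increase distances, they are
`p`-geodesics of `G ⊠ H`. Counting them gives the bound.
-/

section Geodesic

variable {V : Type*} {G : SimpleGraph V} {k : ℕ}

lemma IsKGeodesic.tail {u m v : V} {a : G.Adj u m} {w : G.Walk m v}
    (h : IsKGeodesic G (k + 1) (.cons a w)) : IsKGeodesic G k w := by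
  obtain ⟨hlen, hdist⟩ := h
  have hw : w.length = k := by simpa using hlen
  refine ⟨hw, le_antisymm (hw ▸ G.dist_le w) ?_⟩
  have := a.reachable.dist_triangle_left v
  rw [dist_eq_one_iff_adj.2 a] at this
  omega

lemma IsKGeodesic.reverse {u v : V} {w : G.Walk u v} (h : IsKGeodesic G k w) :
    IsKGeodesic G k w.reverse :=
  ⟨by rw [Walk.length_reverse, h.1], by rw [dist_comm, h.2]⟩

/-- Drop the first edge of the geodesic, or its last edge if `e` is the first one. -/
lemma IsKGeodesic.exists_isKGeodesic_pred {u v : V} {w : G.Walk u v}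
    (hw : IsKGeodesic G (k + 2) w) {e : Sym2 V} (he : e ∈ w.edges) :
    ∃ (x y : V) (w' : G.Walk x y), IsKGeodesic G (k + 1) w' ∧ e ∈ w'.edges := by
  cases w with
  | nil => simp [IsKGeodesic] at hw
  | @cons _ m _ a w₁ =>
    by_cases h₁ : e ∈ w₁.edges
    · exact ⟨_, _, w₁, hw.tail, h₁⟩
    have he₁ : e = s(u, m) := by simpa [h₁] using he
    have hvu : v ≠ u := by
      rintro rfl
      simpa using hw.2
    obtain ⟨m', b, r, hr⟩ := Walk.exists_eq_cons_of_ne hvu (Walk.cons a w₁).reverse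
    have hrev : IsKGeodesic G (k + 2) (Walk.cons b r) := hr ▸ hw.reverse
    by_cases h₂ : e ∈ r.edges
    · exact ⟨_, _, r, hrev.tail, h₂⟩
    have he₂ : e = s(v, m') := by
      have : e ∈ (Walk.cons a w₁).reverse.edges := by
        rw [Walk.edges_reverse, List.mem_reverse]; exact he
      simpa [hr, h₂] using this
    rcases Sym2.eq_iff.1 (he₁.symm.trans he₂) with ⟨rfl, -⟩ | ⟨-, rfl⟩
    · exact (hvu rfl).elim
    · simpa [dist_eq_one_iff_adj.2 a] using hw.2

lemma IsEdgeGeodetic.pred (h : IsEdgeGeodetic G (k + 2)) : IsEdgeGeodetic G (k + 1) :=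
  fun e he => by
    obtain ⟨u, v, w, hw, hew⟩ := h e he
    exact hw.exists_isKGeodesic_pred hew

lemma IsEdgeGeodetic.of_le {j : ℕ} (h : IsEdgeGeodetic G k) (hj : 1 ≤ j) (hjk : j ≤ k) :
    IsEdgeGeodetic G j := by
  induction k, hjk using Nat.le_induction with
  | base => exact h
  | succ n hn ih =>
    obtain ⟨m, rfl⟩ : ∃ m, n = m + 1 := ⟨n - 1, by omega⟩
    exact ih h.pred

lemma IsMaxEdgeGeodetic.pos (h : IsMaxEdgeGeodetic G k) : 0 < k := by
  refine Nat.pos_of_ne_zero fun hk => h.2 fun e he => ?_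
  obtain ⟨u, v, w, hw, hew⟩ := h.1 e he
  have : w.edges = [] := by rw [← List.length_eq_zero_iff, w.length_edges, hw.1, hk]
  simp [this] at hew

end Geodesic

section Cover

variable {V : Type*} {G : SimpleGraph V} {k : ℕ} {ι : Type*}

def IsGeodesicCover (G : SimpleGraph V) (k : ℕ) (f : ι → Σ u v : V, G.Walk u v) : Prop :=
  (∀ i, IsKGeodesic G k (f i).2.2) ∧ ∀ e ∈ G.edgeSet, ∃ i, e ∈ (f i).2.2.edges

lemma IsGeodesicCover.comp_surjective {κ : Type*} {f : ι → Σ u v : V, G.Walk u v}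
    (hf : IsGeodesicCover G k f) {σ : κ → ι} (hσ : σ.Surjective) :
    IsGeodesicCover G k (f ∘ σ) := by
  refine ⟨fun j => hf.1 (σ j), fun e he => ?_⟩
  obtain ⟨i, hi⟩ := hf.2 e he
  obtain ⟨j, rfl⟩ := hσ i
  exact ⟨j, hi⟩

lemma genNum_le_card [Finite ι] {f : ι → Σ u v : V, G.Walk u v}
    (hf : IsGeodesicCover G k f) : genNum G k ≤ Nat.card ι :=
  Nat.sInf_le ⟨_, hf.comp_surjective (Finite.equivFin ι).symm.surjective⟩

lemma IsEdgeGeodetic.exists_isGeodesicCover (h : IsEdgeGeodetic G k) :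
    ∃ f : G.edgeSet → Σ u v : V, G.Walk u v, IsGeodesicCover G k f := by
  choose u v w hw hew using fun e : G.edgeSet => h e.1 e.2
  exact ⟨fun e => ⟨u e, v e, w e⟩, hw, fun e he => ⟨⟨e, he⟩, hew _⟩⟩

lemma IsEdgeGeodetic.exists_isGeodesicCover_genNum [Finite G.edgeSet] (h : IsEdgeGeodetic G k) :
    ∃ f : Fin (genNum G k) → Σ u v : V, G.Walk u v, IsGeodesicCover G k f := by
  obtain ⟨f, hf⟩ := h.exists_isGeodesicCover
  exact Nat.sInf_mem (s := {r | ∃ f : Fin r → Σ u v : V, G.Walk u v, IsGeodesicCover G k f})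
    ⟨Nat.card G.edgeSet, _, hf.comp_surjective (Finite.equivFin G.edgeSet).symm.surjective⟩

end Cover

section Projection

variable {V W : Type*} {G : SimpleGraph V} {G' : SimpleGraph W} {f : V → W}

lemma SimpleGraph.Walk.dist_image_le_length
    (hf : ∀ ⦃x y⦄, G.Adj x y → f x = f y ∨ G'.Adj (f x) (f y)) {u v : V} (w : G.Walk u v) : G'.dist (f u) (f v) ≤ w.length := by
  induction w with
  | nil => simp
  | @cons u m v a w ih =>
    rw [Walk.length_cons]
    rcases hf a with h | h
    · rw [h]; omega
    · have := h.reachable.dist_triangle_left (f v)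
      rw [dist_eq_one_iff_adj.2 h] at this
      omega

lemma isKGeodesic_of_dist_image_eq
    (hf : ∀ ⦃x y⦄, G.Adj x y → f x = f y ∨ G'.Adj (f x) (f y))
    {u v : V} (w : G.Walk u v) (hw : G'.dist (f u) (f v) = w.length) :
    IsKGeodesic G w.length w := by
  refine ⟨rfl, le_antisymm (G.dist_le w) ?_⟩
  obtain ⟨w', hw'⟩ := Reachable.exists_walk_length_eq_dist ⟨w⟩
  exact hw'.symm ▸ hw ▸ w'.dist_image_le_length hf

end Projection

section StrongProd

variable {α β : Type*} {G : SimpleGraph α} {H : SimpleGraph β}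

lemma strongProd_adj_fst {x y : α × β} (h : (strongProd G H).Adj x y) :
    x.1 = y.1 ∨ G.Adj x.1 y.1 := by
  rcases h with ⟨h, -⟩ | ⟨-, h⟩ | ⟨h, -⟩ <;> simp [h]

lemma strongProd_adj_snd {x y : α × β} (h : (strongProd G H).Adj x y) :
    x.2 = y.2 ∨ H.Adj x.2 y.2 := by
  rcases h with ⟨-, h⟩ | ⟨h, -⟩ | ⟨-, h⟩ <;> simp [h]

variable (G H) in
def strongProdLeft (b : β) : G →g strongProd G H :=
  ⟨fun a => (a, b), fun h => Or.inr (Or.inl ⟨rfl, h⟩)⟩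

variable (G H) in
def strongProdRight (a : α) : H →g strongProd G H :=
  ⟨fun b => (a, b), fun h => Or.inl ⟨rfl, h⟩⟩

def SimpleGraph.Walk.zigzagEnd {u v : α} : G.Walk u v → β → β → β
  | .nil, b, _ => b
  | .cons _ w, b, b' => w.zigzagEnd b' b

/-- The walk `(u₀, b), (u₁, b'), (u₂, b), …` along the diagonal edges of `G ⊠ H`. -/
def SimpleGraph.Walk.zigzag : {u v : α} → (w : G.Walk u v) → (b b' : β) → H.Adj b b' →
    (strongProd G H).Walk (u, b) (v, w.zigzagEnd b b')
  | _, _, .nil, _, _, _ => .nil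
  | _, _, .cons a w, _, _, hb => .cons (Or.inr (Or.inr ⟨a, hb⟩)) (w.zigzag _ _ hb.symm)

lemma SimpleGraph.Walk.length_zigzag {u v : α} (w : G.Walk u v) (b b' : β) (hb : H.Adj b b') :
    (w.zigzag b b' hb).length = w.length := by
  induction w generalizing b b' with
  | nil => rfl
  | cons a w ih => exact congrArg (· + 1) (ih _ _ hb.symm)

lemma SimpleGraph.Walk.mem_edges_zigzag {u v : α} (w : G.Walk u v) (b b' : β) (hb : H.Adj b b')
    {x y : α} (hxy : s(x, y) ∈ w.edges) :
    s((x, b), (y, b')) ∈ (w.zigzag b b' hb).edges ∨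
      s((x, b), (y, b')) ∈ (w.zigzag b' b hb.symm).edges := by
  induction w generalizing b b' x y with
  | nil => simp at hxy
  | cons a w ih =>
    rw [Walk.edges_cons, List.mem_cons] at hxy
    rcases hxy with hxy | hxy
    · rcases Sym2.eq_iff.1 hxy with ⟨rfl, rfl⟩ | ⟨rfl, rfl⟩
      · exact Or.inl List.mem_cons_self
      · exact Or.inr (List.mem_cons.2 (Or.inl Sym2.eq_swap))
    · rw [Sym2.eq_swap] at hxy
      rcases ih b' b hb.symm hxy with h | h <;> rw [Sym2.eq_swap] at h
      · exact Or.inl (List.mem_cons_of_mem _ h)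
      · exact Or.inr (List.mem_cons_of_mem _ h)

variable {ι κ : Type*}

def strongProdFamily (f : ι → Σ u v : α, G.Walk u v) (g : κ → Σ u v : β, H.Walk u v) :
    (β × ι) ⊕ (α × κ) ⊕ (ι × H.Dart) → Σ u v : α × β, (strongProd G H).Walk u v
  | .inl (b, i) => ⟨_, _, (f i).2.2.map (strongProdLeft G H b)⟩
  | .inr (.inl (a, j)) => ⟨_, _, (g j).2.2.map (strongProdRight G H a)⟩
  | .inr (.inr (i, d)) => ⟨_, _, (f i).2.2.zigzag d.fst d.snd d.adj⟩

lemma isGeodesicCover_strongProdFamily {k : ℕ} {f : ι → Σ u v : α, G.Walk u v}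
    {g : κ → Σ u v : β, H.Walk u v} (hf : IsGeodesicCover G k f) (hg : IsGeodesicCover H k g) :
    IsGeodesicCover (strongProd G H) k (strongProdFamily f g) := by
  have isKGeodesic_of_fst {x y : α × β} (w : (strongProd G H).Walk x y)
      (hw : G.dist x.1 y.1 = k) (hk : w.length = k) : IsKGeodesic _ k w :=
    hk ▸ isKGeodesic_of_dist_image_eq (fun _ _ => strongProd_adj_fst) w (hw.trans hk.symm)
  have isKGeodesic_of_snd {x y : α × β} (w : (strongProd G H).Walk x y)
      (hw : H.dist x.2 y.2 = k) (hk : w.length = k) : IsKGeodesic _ k w :=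
    hk ▸ isKGeodesic_of_dist_image_eq (fun _ _ => strongProd_adj_snd) w (hw.trans hk.symm)
  refine ⟨?_, ?_⟩
  · rintro (⟨b, i⟩ | ⟨a, j⟩ | ⟨i, d⟩)
    · exact isKGeodesic_of_fst _ (hf.1 i).2 (by simpa [strongProdFamily] using (hf.1 i).1)
    · exact isKGeodesic_of_snd _ (hg.1 j).2 (by simpa [strongProdFamily] using (hg.1 j).1)
    · exact isKGeodesic_of_fst _ (hf.1 i).2
        (by simpa [strongProdFamily, Walk.length_zigzag] using (hf.1 i).1)
  · rintro ⟨⟨a, b⟩, ⟨a', b'⟩⟩ (⟨ha, h⟩ | ⟨hb, h⟩ | ⟨ha, hb⟩)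
    · obtain rfl : a = a' := ha
      obtain ⟨j, hj⟩ := hg.2 s(b, b') h
      exact ⟨.inr (.inl (a, j)), by
        simp only [strongProdFamily, Walk.edges_map]; exact List.mem_map_of_mem hj⟩
    · obtain rfl : b = b' := hb
      obtain ⟨i, hi⟩ := hf.2 s(a, a') h
      exact ⟨.inl (b, i), by
        simp only [strongProdFamily, Walk.edges_map]; exact List.mem_map_of_mem hi⟩
    · obtain ⟨i, hi⟩ := hf.2 s(a, a') ha
      rcases (f i).2.2.mem_edges_zigzag b b' hb hi with h | h
      · exact ⟨.inr (.inr (i, ⟨(b, b'), hb⟩)), h⟩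
      · exact ⟨.inr (.inr (i, ⟨(b', b), hb.symm⟩)), h⟩

end StrongProd

theorem strongProd_genNum_le_general {α β : Type*} [Fintype α] [Fintype β]
    (G : SimpleGraph α) (H : SimpleGraph β)
    (p q : ℕ) (hG : IsMaxEdgeGeodetic G p) (hH : IsMaxEdgeGeodetic H q) (hpq : p ≤ q) :
    genNum (strongProd G H) p ≤
      Fintype.card β * genNum G p + Fintype.card α * Nat.card H.edgeSet +
        2 * genNum G p * Nat.card H.edgeSet := by
  classical
  obtain ⟨f, hf⟩ := hG.1.exists_isGeodesicCover_genNum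
  obtain ⟨g, hg⟩ := (hH.1.of_le hG.pos hpq).exists_isGeodesicCover
  calc genNum (strongProd G H) p ≤ Nat.card _ :=
        genNum_le_card (isGeodesicCover_strongProdFamily hf hg)
    _ = _ := by
      simp only [Nat.card_eq_fintype_card, Fintype.card_sum, Fintype.card_prod, Fintype.card_fin,
        dart_card_eq_twice_card_edges, edgeFinset_card]
      ring

/-- If `G` is a finite connected `[p]`-edge geodetic graph and `H` is a finite connected
`[q]`-edge geodetic graph with `p ≤ q` (so that `G ⊠ H` is `[p]`-edge geodetic), then
`|gen(G ⊠ H)| ≤ |V(H)|·|gen(G)| + |V(G)|·|E(H)| + 2·|gen(G)|·|E(H)|`. -/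
theorem strongProd_genNum_le {α β : Type*} [Fintype α] [Fintype β]
    (G : SimpleGraph α) (H : SimpleGraph β) (hGc : G.Connected) (hHc : H.Connected)
    (p q : ℕ) (hG : IsMaxEdgeGeodetic G p) (hH : IsMaxEdgeGeodetic H q) (hpq : p ≤ q) :
    genNum (strongProd G H) p ≤
      Fintype.card β * genNum G p + Fintype.card α * Nat.card H.edgeSet +
        2 * genNum G p * Nat.card H.edgeSet :=
  strongProd_genNum_le_general G H p q hG hH hpq
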